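/- arXiv:2012.07924 — 2 statements merged into one kernel-verified Lean document; each statement's English description precedes it below -/
import Mathlib

section
/- The function u(t,x) = E(t) S₂(x) (1 + α sin θ(t,x)) solves the modified Black–Scholes–Barenblatt terminal value problem with temporal oscillation: for all t ∈ ℝ and x ∈ ℝ^d, ∂_t u(t,x) + (1/2) σ² Σ_{i=1}^d x_i² ∂²u/∂x_i²(t,x) = r ( u(t,x) − x · ∇_x u(t,x) ) + α E(t) P(t,x), and u(T,x) = S₂(x) (1 + α sin(β S₁(x) − γ T)). -/
lemma sum_update_pow {d : ℕ} (x : EuclideanSpace ℝ (Fin d)) (i : Fin d) (s : ℝ) (j : ℕ) :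
    ∑ k : Fin d, (Function.update x i s k) ^ j
      = s ^ j + ∑ k ∈ Finset.univ.erase i, (x k) ^ j := by
  rw [← Finset.add_sum_erase _ _ (Finset.mem_univ i)]
  simp only [Function.update_self]
  congr 1
  refine Finset.sum_congr rfl fun k hk => ?_
  rw [Function.update_of_ne (Finset.ne_of_mem_erase hk)]

lemma hd1 (c A B C a b s : ℝ) :
    HasDerivAt (fun s => c * (s ^ 2 + A) * (1 + a * Real.sin (b * (s + B) - C)))
      (c * (2 * s) * (1 + a * Real.sin (b * (s + B) - C))
        + c * (s ^ 2 + A) * (a * (Real.cos (b * (s + B) - C) * b))) s := by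
  have h1 : HasDerivAt (fun s : ℝ => c * (s ^ 2 + A)) (c * (2 * s)) s := by
    simpa using ((hasDerivAt_pow 2 s).add_const A).const_mul c
  have hφ : HasDerivAt (fun s : ℝ => b * (s + B) - C) b s := by
    simpa using (((hasDerivAt_id s).add_const B).const_mul b).sub_const C
  have hsin := (Real.hasDerivAt_sin (b * (s + B) - C)).comp s hφ
  exact h1.mul ((hsin.const_mul a).const_add 1)

lemma hd2 (c A B C a b s : ℝ) :
    HasDerivAt (fun s => c * (2 * s) * (1 + a * Real.sin (b * (s + B) - C))
        + c * (s ^ 2 + A) * (a * (Real.cos (b * (s + B) - C) * b)))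
      (c * (2 * (1 + a * Real.sin (b * (s + B) - C))
        + 4 * s * a * b * Real.cos (b * (s + B) - C)
        - (s ^ 2 + A) * a * b ^ 2 * Real.sin (b * (s + B) - C))) s := by
  have hφ : HasDerivAt (fun s : ℝ => b * (s + B) - C) b s := by
    simpa using (((hasDerivAt_id s).add_const B).const_mul b).sub_const C
  have hsin := (Real.hasDerivAt_sin (b * (s + B) - C)).comp s hφ
  have hcos := (Real.hasDerivAt_cos (b * (s + B) - C)).comp s hφ
  have h1 : HasDerivAt (fun s : ℝ => c * (s ^ 2 + A)) (c * (2 * s)) s := by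
    simpa using ((hasDerivAt_pow 2 s).add_const A).const_mul c
  have hA : HasDerivAt (fun s : ℝ => c * (2 * s)) (c * (2 * 1)) s :=
    ((hasDerivAt_id s).const_mul 2).const_mul c
  have hB : HasDerivAt (fun s : ℝ => 1 + a * Real.sin (b * (s + B) - C))
      (a * (Real.cos (b * (s + B) - C) * b)) s := (hsin.const_mul a).const_add 1
  have hC : HasDerivAt (fun s : ℝ => a * (Real.cos (b * (s + B) - C) * b))
      (a * (-Real.sin (b * (s + B) - C) * b * b)) s := (hcos.mul_const b).const_mul a
  have := (hA.mul hB).add (h1.mul hC)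
  exact this.congr_deriv (by ring)

lemma hdt (r σ T s2 a b s1 g t : ℝ) :
    HasDerivAt (fun t' => Real.exp ((r + σ ^ 2) * (T - t')) * s2
        * (1 + a * Real.sin (b * s1 - g * t')))
      (Real.exp ((r + σ ^ 2) * (T - t))
        * (-(r + σ ^ 2) * s2 * (1 + a * Real.sin (b * s1 - g * t))
          - s2 * a * g * Real.cos (b * s1 - g * t))) t := by
  have hi : HasDerivAt (fun t' : ℝ => (r + σ ^ 2) * (T - t')) ((r + σ ^ 2) * (-1)) t := by
    exact ((hasDerivAt_id t).const_sub T).const_mul (r + σ ^ 2)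
  have hexp := (Real.hasDerivAt_exp ((r + σ ^ 2) * (T - t))).comp t hi
  have hj : HasDerivAt (fun t' : ℝ => b * s1 - g * t') (-(g * 1)) t := by
    simpa using ((hasDerivAt_id t).const_mul g).const_sub (b * s1)
  have hsin := (Real.hasDerivAt_sin (b * s1 - g * t)).comp t hj
  have := (hexp.mul_const s2).mul ((hsin.const_mul a).const_add 1)
  simp only [Function.comp_def] at this
  exact this.congr_deriv (by ring)

/-- The function `u(t,x) = E(t) S₂(x) (1 + α sin θ(t,x))` solves the modified
Black–Scholes–Barenblatt terminal value problem with temporal oscillation: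
`∂ₜu + (1/2) σ² Σᵢ xᵢ² ∂²u/∂xᵢ² = r (u − x ⬝ ∇ₓu) + α E(t) P(t,x)` and
`u(T,x) = S₂(x) (1 + α sin(β S₁(x) − γ T))`. -/
theorem oscillatory_bsb_closed_form_solves_pde
    (d : ℕ) (hd : 1 ≤ d) (r σ α β γ T : ℝ) (hT : 0 < T)
    (S : ℕ → EuclideanSpace ℝ (Fin d) → ℝ)
    (hS : ∀ (j : ℕ) (x : EuclideanSpace ℝ (Fin d)), S j x = ∑ i : Fin d, (x i) ^ j)
    (E : ℝ → ℝ) (hE : ∀ t : ℝ, E t = Real.exp ((r + σ ^ 2) * (T - t)))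
    (θ : ℝ → EuclideanSpace ℝ (Fin d) → ℝ)
    (hθ : ∀ (t : ℝ) (x : EuclideanSpace ℝ (Fin d)), θ t x = β * S 1 x - γ * t)
    (u : ℝ → EuclideanSpace ℝ (Fin d) → ℝ)
    (hu : ∀ (t : ℝ) (x : EuclideanSpace ℝ (Fin d)),
      u t x = E t * S 2 x * (1 + α * Real.sin (θ t x)))
    (P : ℝ → EuclideanSpace ℝ (Fin d) → ℝ)
    (hP : ∀ (t : ℝ) (x : EuclideanSpace ℝ (Fin d)),
      P t x = (r * β * S 1 x * S 2 x - γ * S 2 x + 2 * σ ^ 2 * β * S 3 x)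
                * Real.cos (θ t x)
              - σ ^ 2 * β ^ 2 / 2 * (S 2 x) ^ 2 * Real.sin (θ t x)) :
    (∀ (t : ℝ) (x : EuclideanSpace ℝ (Fin d)),
      deriv (fun t' => u t' x) t
        + (1 / 2) * σ ^ 2 * ∑ i : Fin d, (x i) ^ 2 *
            deriv (deriv (fun s => u t (WithLp.toLp 2 (Function.update x i s)))) (x i)
      = r * (u t x
          - ∑ i : Fin d, x i * deriv (fun s => u t (WithLp.toLp 2 (Function.update x i s))) (x i))
        + α * E t * P t x)
    ∧ (∀ x : EuclideanSpace ℝ (Fin d),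
      u T x = S 2 x * (1 + α * Real.sin (β * S 1 x - γ * T))) := by
  constructor
  · intro t x
    have hS1 : S 1 x = ∑ k : Fin d, x k := by
      rw [hS]; exact Finset.sum_congr rfl fun k _ => pow_one _
    -- time derivative
    have hut : (fun t' => u t' x) = fun t' =>
        Real.exp ((r + σ ^ 2) * (T - t')) * S 2 x
          * (1 + α * Real.sin (β * S 1 x - γ * t')) :=
      funext fun t' => by rw [hu, hE, hθ]
    have hdt' : deriv (fun t' => u t' x) t
        = Real.exp ((r + σ ^ 2) * (T - t))
          * (-(r + σ ^ 2) * S 2 x * (1 + α * Real.sin (β * S 1 x - γ * t))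
            - S 2 x * α * γ * Real.cos (β * S 1 x - γ * t)) := by
      rw [hut]; exact (hdt r σ T (S 2 x) α β (S 1 x) γ t).deriv
    -- spatial derivatives
    have hfun : ∀ i : Fin d, (fun s => u t (WithLp.toLp 2 (Function.update x i s)))
        = fun s => E t * (s ^ 2 + ∑ k ∈ Finset.univ.erase i, (x k) ^ 2)
            * (1 + α * Real.sin (β * (s + ∑ k ∈ Finset.univ.erase i, x k) - γ * t)) := by
      intro i
      funext s
      rw [hu, hθ, hS 2, hS 1, WithLp.ofLp_toLp, sum_update_pow, sum_update_pow]
      simp only [pow_one]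
    have hrest2 : ∀ i : Fin d, (x i) ^ 2 + ∑ k ∈ Finset.univ.erase i, (x k) ^ 2
        = ∑ k : Fin d, (x k) ^ 2 := fun i =>
      Finset.add_sum_erase _ (fun k => (x k) ^ 2) (Finset.mem_univ i)
    have hrest1 : ∀ i : Fin d, x i + ∑ k ∈ Finset.univ.erase i, x k
        = ∑ k : Fin d, x k := fun i =>
      Finset.add_sum_erase _ (fun k => x k) (Finset.mem_univ i)
    have key1 : ∀ i : Fin d, deriv (fun s => u t (WithLp.toLp 2 (Function.update x i s))) (x i)
        = E t * (2 * (x i)) * (1 + α * Real.sin (β * S 1 x - γ * t))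
          + E t * S 2 x * (α * (Real.cos (β * S 1 x - γ * t) * β)) := by
      intro i
      rw [hfun i,
        (hd1 (E t) (∑ k ∈ Finset.univ.erase i, (x k) ^ 2)
          (∑ k ∈ Finset.univ.erase i, x k) (γ * t) α β (x i)).deriv,
        hrest1 i, hrest2 i, ← hS1, ← hS 2]
    have key2 : ∀ i : Fin d, deriv (deriv (fun s => u t (WithLp.toLp 2 (Function.update x i s)))) (x i)
        = E t * (2 * (1 + α * Real.sin (β * S 1 x - γ * t))
            + 4 * (x i) * α * β * Real.cos (β * S 1 x - γ * t)
            - S 2 x * α * β ^ 2 * Real.sin (β * S 1 x - γ * t)) := by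
      intro i
      rw [hfun i]
      have hder : deriv (fun s => E t * (s ^ 2 + ∑ k ∈ Finset.univ.erase i, (x k) ^ 2)
          * (1 + α * Real.sin (β * (s + ∑ k ∈ Finset.univ.erase i, x k) - γ * t)))
          = fun s => E t * (2 * s)
              * (1 + α * Real.sin (β * (s + ∑ k ∈ Finset.univ.erase i, x k) - γ * t))
            + E t * (s ^ 2 + ∑ k ∈ Finset.univ.erase i, (x k) ^ 2)
              * (α * (Real.cos (β * (s + ∑ k ∈ Finset.univ.erase i, x k) - γ * t) * β)) :=
        funext fun s => (hd1 _ _ _ _ _ _ s).deriv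
      rw [hder, (hd2 (E t) (∑ k ∈ Finset.univ.erase i, (x k) ^ 2)
          (∑ k ∈ Finset.univ.erase i, x k) (γ * t) α β (x i)).deriv,
        hrest1 i, hrest2 i, ← hS1, ← hS 2]
    -- sum identities
    have hsum2 : ∑ i : Fin d, (x i) ^ 2 *
        deriv (deriv (fun s => u t (WithLp.toLp 2 (Function.update x i s)))) (x i)
        = E t * ((2 * (1 + α * Real.sin (β * S 1 x - γ * t))
              - S 2 x * α * β ^ 2 * Real.sin (β * S 1 x - γ * t)) * S 2 x
            + 4 * α * β * Real.cos (β * S 1 x - γ * t) * S 3 x) := by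
      rw [Finset.sum_congr rfl fun i _ => by rw [key2 i]]
      rw [Finset.sum_congr rfl (fun i _ => (by ring :
        (x i) ^ 2 * (E t * (2 * (1 + α * Real.sin (β * S 1 x - γ * t))
            + 4 * (x i) * α * β * Real.cos (β * S 1 x - γ * t)
            - S 2 x * α * β ^ 2 * Real.sin (β * S 1 x - γ * t)))
          = (E t * (2 * (1 + α * Real.sin (β * S 1 x - γ * t))
              - S 2 x * α * β ^ 2 * Real.sin (β * S 1 x - γ * t))) * (x i) ^ 2
            + (E t * (4 * α * β * Real.cos (β * S 1 x - γ * t))) * (x i) ^ 3))]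
      rw [Finset.sum_add_distrib, ← Finset.mul_sum, ← Finset.mul_sum, ← hS 2, ← hS 3]
      ring
    have hsum1 : ∑ i : Fin d, x i *
        deriv (fun s => u t (WithLp.toLp 2 (Function.update x i s))) (x i)
        = E t * (2 * S 2 x) * (1 + α * Real.sin (β * S 1 x - γ * t))
          + E t * S 1 x * S 2 x * (α * (Real.cos (β * S 1 x - γ * t) * β)) := by
      rw [Finset.sum_congr rfl fun i _ => by rw [key1 i]]
      rw [Finset.sum_congr rfl (fun i _ => (by ring :
        x i * (E t * (2 * (x i)) * (1 + α * Real.sin (β * S 1 x - γ * t))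
            + E t * S 2 x * (α * (Real.cos (β * S 1 x - γ * t) * β)))
          = (E t * 2 * (1 + α * Real.sin (β * S 1 x - γ * t))) * (x i) ^ 2
            + (E t * S 2 x * (α * (Real.cos (β * S 1 x - γ * t) * β))) * x i))]
      rw [Finset.sum_add_distrib, ← Finset.mul_sum, ← Finset.mul_sum, ← hS1, ← hS 2]
      ring
    rw [hdt', hsum2, hsum1, hu, hP, hθ, hE]
    ring
  · intro x
    rw [hu, hE, hθ]
    simp
end

section
/- The oscillatory perturbation v(t,x) = α E(t) S₂(x) sin θ(t,x) produces exactly the source term α E(t) P(t,x) under the Black–Scholes–Barenblatt operator: for all t ∈ ℝ and x ∈ ℝ^d, ∂_t v(t,x) + (1/2) σ² Σ_{i=1}^d x_i² ∂²v/∂x_i²(t,x) − r ( v(t,x) − x · ∇_x v(t,x) ) = α E(t) P(t,x). -/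
private lemma osc_hd1 (a A B c s : ℝ) :
    HasDerivAt (fun s => a * (A + s ^ 2) * Real.sin (B * s + c))
      (a * (2 * s) * Real.sin (B * s + c)
        + a * (A + s ^ 2) * (Real.cos (B * s + c) * B)) s := by
  have h1 : HasDerivAt (fun s : ℝ => a * (A + s ^ 2)) (a * (2 * s)) s := by
    have := ((hasDerivAt_pow 2 s).const_add A).const_mul a
    simpa using this
  have hb : HasDerivAt (fun s : ℝ => B * s + c) B s := by
    simpa using ((hasDerivAt_id s).const_mul B).add_const c
  have h2 : HasDerivAt (fun s : ℝ => Real.sin (B * s + c))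
      (Real.cos (B * s + c) * B) s := hb.sin
  exact h1.mul h2

private lemma osc_hd2 (a A B c s : ℝ) :
    HasDerivAt (fun s => a * (2 * s) * Real.sin (B * s + c)
        + a * (A + s ^ 2) * (Real.cos (B * s + c) * B))
      ((a * 2 * Real.sin (B * s + c) + a * (2 * s) * (Real.cos (B * s + c) * B))
        + (a * (2 * s) * (Real.cos (B * s + c) * B)
            + a * (A + s ^ 2) * (-Real.sin (B * s + c) * B * B))) s := by
  have hb : HasDerivAt (fun s : ℝ => B * s + c) B s := by
    simpa using ((hasDerivAt_id s).const_mul B).add_const c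
  have hsin : HasDerivAt (fun s : ℝ => Real.sin (B * s + c))
      (Real.cos (B * s + c) * B) s := hb.sin
  have hcos : HasDerivAt (fun s : ℝ => Real.cos (B * s + c) * B)
      (-Real.sin (B * s + c) * B * B) s := by
    have := ((Real.hasDerivAt_cos (B * s + c)).comp s hb).mul_const B
    simpa [mul_comm, mul_assoc, mul_left_comm] using this
  have h1 : HasDerivAt (fun s : ℝ => a * (2 * s)) (a * 2) s := by
    simpa [mul_assoc] using ((hasDerivAt_id s).const_mul 2).const_mul a
  have h2 : HasDerivAt (fun s : ℝ => a * (A + s ^ 2)) (a * (2 * s)) s := by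
    have := ((hasDerivAt_pow 2 s).const_add A).const_mul a
    simpa using this
  exact (h1.mul hsin).add (h2.mul hcos)

private lemma osc_sum_update_pow {d : ℕ} (x : EuclideanSpace ℝ (Fin d)) (i : Fin d)
    (k : ℕ) (s : ℝ) :
    ∑ j : Fin d, (Function.update x i s j) ^ k
      = (∑ j : Fin d, (x j) ^ k) - (x i) ^ k + s ^ k := by
  have h : ∀ j : Fin d, (Function.update x i s j) ^ k
      = Function.update (fun j : Fin d => (x j) ^ k) i (s ^ k) j := fun j =>
    Function.apply_update (fun _ y => y ^ k) x i s j
  simp_rw [h]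
  rw [Finset.sum_update_of_mem (Finset.mem_univ i),
    Finset.sdiff_singleton_eq_erase, Finset.sum_erase_eq_sub (Finset.mem_univ i)]
  ring

/-- The oscillatory perturbation `v(t,x) = α E(t) S₂(x) sin θ(t,x)` produces
exactly the source term `α E(t) P(t,x)` under the Black–Scholes–Barenblatt
operator:
`∂ₜv + (1/2) σ² Σᵢ xᵢ² ∂²v/∂xᵢ² − r (v − x ⬝ ∇ₓv) = α E(t) P(t,x)`. -/
theorem oscillatory_perturbation_source_term
    (d : ℕ) (hd : 1 ≤ d) (r σ α β γ T : ℝ) (hT : 0 < T)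
    (S : ℕ → EuclideanSpace ℝ (Fin d) → ℝ)
    (hS : ∀ (j : ℕ) (x : EuclideanSpace ℝ (Fin d)), S j x = ∑ i : Fin d, (x i) ^ j)
    (E : ℝ → ℝ) (hE : ∀ t : ℝ, E t = Real.exp ((r + σ ^ 2) * (T - t)))
    (θ : ℝ → EuclideanSpace ℝ (Fin d) → ℝ)
    (hθ : ∀ (t : ℝ) (x : EuclideanSpace ℝ (Fin d)), θ t x = β * S 1 x - γ * t)
    (v : ℝ → EuclideanSpace ℝ (Fin d) → ℝ)
    (hv : ∀ (t : ℝ) (x : EuclideanSpace ℝ (Fin d)),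
      v t x = α * E t * S 2 x * Real.sin (θ t x))
    (P : ℝ → EuclideanSpace ℝ (Fin d) → ℝ)
    (hP : ∀ (t : ℝ) (x : EuclideanSpace ℝ (Fin d)),
      P t x = (r * β * S 1 x * S 2 x - γ * S 2 x + 2 * σ ^ 2 * β * S 3 x)
                * Real.cos (θ t x)
              - σ ^ 2 * β ^ 2 / 2 * (S 2 x) ^ 2 * Real.sin (θ t x)) :
    ∀ (t : ℝ) (x : EuclideanSpace ℝ (Fin d)),
      deriv (fun t' => v t' x) t
        + (1 / 2) * σ ^ 2 * ∑ i : Fin d, (x i) ^ 2 *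
            deriv (deriv (fun s => v t (WithLp.toLp 2 (Function.update x i s)))) (x i)
        - r * (v t x
            - ∑ i : Fin d, x i * deriv (fun s => v t (WithLp.toLp 2 (Function.update x i s))) (x i))
      = α * E t * P t x := by
  intro t x
  -- updated values of S
  have hSup : ∀ (i : Fin d) (k : ℕ) (s : ℝ),
      S k (WithLp.toLp 2 (Function.update x i s)) = S k x - (x i) ^ k + s ^ k := by
    intro i k s
    rw [hS, hS]
    exact osc_sum_update_pow x i k s
  -- spatial function in normal form
  have hfs : ∀ i : Fin d, (fun s => v t (WithLp.toLp 2 (Function.update x i s)))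
      = fun s => (α * E t) * ((S 2 x - (x i) ^ 2) + s ^ 2)
          * Real.sin (β * s + (β * (S 1 x - x i) - γ * t)) := by
    intro i
    funext s
    rw [hv, hθ, hSup, hSup]
    have harg : β * (S 1 x - (x i) ^ 1 + s ^ 1) - γ * t
        = β * s + (β * (S 1 x - x i) - γ * t) := by ring
    rw [harg]
  -- first spatial derivative
  have hD1 : ∀ i : Fin d, deriv (fun s => v t (WithLp.toLp 2 (Function.update x i s))) (x i)
      = α * E t * (2 * x i * Real.sin (θ t x) + β * S 2 x * Real.cos (θ t x)) := by
    intro i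
    rw [hfs i, (osc_hd1 (α * E t) (S 2 x - (x i) ^ 2) β (β * (S 1 x - x i) - γ * t) (x i)).deriv]
    have harg : β * x i + (β * (S 1 x - x i) - γ * t) = θ t x := by rw [hθ]; ring
    rw [harg]; ring
  -- second spatial derivative
  have hD2 : ∀ i : Fin d, deriv (deriv (fun s => v t (WithLp.toLp 2 (Function.update x i s)))) (x i)
      = α * E t * (2 * Real.sin (θ t x) + 4 * β * x i * Real.cos (θ t x)
          - β ^ 2 * S 2 x * Real.sin (θ t x)) := by
    intro i
    have hdf : deriv (fun s => v t (WithLp.toLp 2 (Function.update x i s)))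
        = fun s => (α * E t) * (2 * s) * Real.sin (β * s + (β * (S 1 x - x i) - γ * t))
            + (α * E t) * ((S 2 x - (x i) ^ 2) + s ^ 2)
                * (Real.cos (β * s + (β * (S 1 x - x i) - γ * t)) * β) := by
      rw [hfs i]
      exact funext fun s =>
        (osc_hd1 (α * E t) (S 2 x - (x i) ^ 2) β (β * (S 1 x - x i) - γ * t) s).deriv
    rw [hdf, (osc_hd2 (α * E t) (S 2 x - (x i) ^ 2) β (β * (S 1 x - x i) - γ * t) (x i)).deriv]
    have harg : β * x i + (β * (S 1 x - x i) - γ * t) = θ t x := by rw [hθ]; ring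
    rw [harg]; ring
  -- time derivative
  have hDt : deriv (fun t' => v t' x) t
      = -α * (r + σ ^ 2) * E t * S 2 x * Real.sin (θ t x)
        - α * γ * E t * S 2 x * Real.cos (θ t x) := by
    have hft : (fun t' => v t' x)
        = fun t' => α * Real.exp ((r + σ ^ 2) * (T - t')) * S 2 x
            * Real.sin (β * S 1 x - γ * t') := by
      funext t'
      rw [hv, hE, hθ]
    have hin : HasDerivAt (fun t' : ℝ => (r + σ ^ 2) * (T - t')) ((r + σ ^ 2) * (0 - 1)) t :=
      ((hasDerivAt_const t T).sub (hasDerivAt_id t)).const_mul (r + σ ^ 2)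
    have hexp : HasDerivAt (fun t' : ℝ => Real.exp ((r + σ ^ 2) * (T - t')))
        (Real.exp ((r + σ ^ 2) * (T - t)) * ((r + σ ^ 2) * (0 - 1))) t :=
      hin.exp
    have hin2 : HasDerivAt (fun t' : ℝ => β * S 1 x - γ * t') (0 - γ * 1) t :=
      (hasDerivAt_const t (β * S 1 x)).sub ((hasDerivAt_id t).const_mul γ)
    have hsin : HasDerivAt (fun t' : ℝ => Real.sin (β * S 1 x - γ * t'))
        (Real.cos (β * S 1 x - γ * t) * (0 - γ * 1)) t :=
      hin2.sin
    have h := (((hexp.const_mul α).mul_const (S 2 x)).mul hsin).deriv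
    simp only [Pi.mul_def] at h
    rw [hft, h, hθ, hE]
    ring
  simp only [hD1, hD2, hDt]
  -- reduce the sums
  have e2 : ∑ i : Fin d, (x i) ^ 2
        * (α * E t * (2 * Real.sin (θ t x) + 4 * β * x i * Real.cos (θ t x)
            - β ^ 2 * S 2 x * Real.sin (θ t x)))
      = α * E t * (2 * Real.sin (θ t x) - β ^ 2 * S 2 x * Real.sin (θ t x)) * S 2 x
        + α * E t * (4 * β * Real.cos (θ t x)) * S 3 x := by
    have h1 : ∀ i : Fin d, (x i) ^ 2
          * (α * E t * (2 * Real.sin (θ t x) + 4 * β * x i * Real.cos (θ t x)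
              - β ^ 2 * S 2 x * Real.sin (θ t x)))
        = α * E t * (2 * Real.sin (θ t x) - β ^ 2 * S 2 x * Real.sin (θ t x)) * (x i) ^ 2
          + α * E t * (4 * β * Real.cos (θ t x)) * (x i) ^ 3 := fun i => by ring
    simp_rw [h1]
    rw [Finset.sum_add_distrib, ← Finset.mul_sum, ← Finset.mul_sum, ← hS 2, ← hS 3]
  have e1 : ∑ i : Fin d, x i
        * (α * E t * (2 * x i * Real.sin (θ t x) + β * S 2 x * Real.cos (θ t x)))
      = α * E t * (2 * Real.sin (θ t x)) * S 2 x
        + α * E t * (β * S 2 x * Real.cos (θ t x)) * S 1 x := by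
    have h1 : ∀ i : Fin d, x i
          * (α * E t * (2 * x i * Real.sin (θ t x) + β * S 2 x * Real.cos (θ t x)))
        = α * E t * (2 * Real.sin (θ t x)) * (x i) ^ 2
          + α * E t * (β * S 2 x * Real.cos (θ t x)) * (x i) ^ 1 := fun i => by ring
    simp_rw [h1]
    rw [Finset.sum_add_distrib, ← Finset.mul_sum, ← Finset.mul_sum, ← hS 2, ← hS 1]
  rw [e1, e2, hv, hP]
  ring
end
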